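/- Let G be a finite group, n a positive integer, and k a field such that char k does not divide n − 1 or does not divide n − |G|. Then any unital k-algebra Q admitting a comeasuring of Frobenius algebras from M_n(k) to the Frobenius group algebra k[G], or from k[G] to M_n(k), is the zero algebra. -/

import Mathlib

open TensorProduct

/-- A comeasuring of Frobenius algebras from `(A, Δ_A, ν_A)` to `(B, Δ_B, ν_B)` with
coefficient algebra `Q`: a linear map `ρ : A → B ⊗ Q`, `ρ(a) = a⁽⁰⁾ ⊗ a⁽¹⁾`, which is an
algebra map and satisfies
`a^{(1)[0]} ⊗ a^{(2)[0]} ⊗ a^{(1)[1]}a^{(2)[1]} = a^{[0](1)} ⊗ a^{[0](2)} ⊗ a^{[1]}`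
and `ν_B(a⁽⁰⁾)a⁽¹⁾ = ν_A(a)1_Q`. -/
def IsFrobComeasuring {k A B Q : Type*} [CommRing k] [Ring A] [Algebra k A]
    [Ring B] [Algebra k B] [Ring Q] [Algebra k Q]
    (ΔA : A →ₗ[k] A ⊗[k] A) (νA : A →ₗ[k] k)
    (ΔB : B →ₗ[k] B ⊗[k] B) (νB : B →ₗ[k] k)
    (ρ : A →ₗ[k] B ⊗[k] Q) : Prop :=
  (∀ a a' : A, ρ (a * a') = ρ a * ρ a') ∧
  (ρ 1 = 1) ∧
  (∀ a : A,
    TensorProduct.map (LinearMap.id : B ⊗[k] B →ₗ[k] B ⊗[k] B) (LinearMap.mul' k Q)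
        (TensorProduct.tensorTensorTensorComm k B Q B Q
          (TensorProduct.map ρ ρ (ΔA a)))
      = TensorProduct.map ΔB (LinearMap.id : Q →ₗ[k] Q) (ρ a)) ∧
  (∀ a : A,
    TensorProduct.lid k Q
        (TensorProduct.map νB (LinearMap.id : Q →ₗ[k] Q) (ρ a)) = νA a • (1 : Q))

section GroupFrobenius

variable (k : Type*) [Field k] (G : Type*) [Group G] [Fintype G] [DecidableEq G]

/-- The Frobenius comultiplication `Δ(g) = Σ_{h ∈ G} gh⁻¹ ⊗ h` on a finite group
algebra. -/
noncomputable def groupComul :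
    MonoidAlgebra k G →ₗ[k] MonoidAlgebra k G ⊗[k] MonoidAlgebra k G :=
  (Finsupp.lsum k fun g =>
    LinearMap.toSpanSingleton k (MonoidAlgebra k G ⊗[k] MonoidAlgebra k G)
      (∑ h : G, MonoidAlgebra.single (g * h⁻¹) (1 : k) ⊗ₜ[k] MonoidAlgebra.single h (1 : k)))
      ∘ₗ (MonoidAlgebra.coeffLinearEquiv k).toLinearMap

/-- The Frobenius counit `ν(g) = δ_{g,1}` on a finite group algebra. -/
noncomputable def groupCounit : MonoidAlgebra k G →ₗ[k] k :=
  Finsupp.lapply (1 : G) ∘ₗ (MonoidAlgebra.coeffLinearEquiv k).toLinearMap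

end GroupFrobenius

section MatrixFrobenius

variable (k : Type*) [Field k] (n : ℕ)

/-- The Frobenius comultiplication `Δ(E_{ij}) = Σ_l E_{il} ⊗ E_{lj}` on the matrix
algebra `M_n(k)`. -/
noncomputable def matrixComul :
    Matrix (Fin n) (Fin n) k →ₗ[k]
      Matrix (Fin n) (Fin n) k ⊗[k] Matrix (Fin n) (Fin n) k where
  toFun M := ∑ i : Fin n, ∑ j : Fin n, ∑ l : Fin n,
    M i j • (Matrix.single i l (1 : k) ⊗ₜ[k] Matrix.single l j (1 : k))
  map_add' M N := by
    simp [Matrix.add_apply, add_smul, Finset.sum_add_distrib]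
  map_smul' c M := by
    simp [Matrix.smul_apply, smul_smul, Finset.smul_sum]

/-- The Frobenius counit on `M_n(k)` : the trace, `ν(E_{ij}) = δ_{ij}`. -/
noncomputable def matrixCounit : Matrix (Fin n) (Fin n) k →ₗ[k] k :=
  Matrix.traceLinearMap (Fin n) k k

end MatrixFrobenius

/-!
Applying `ν_B ⊗ id` to `ρ(1) = 1` gives `ν_A(1) = ν_B(1)` in `Q`. Applying `m_B ⊗ id` to the
comultiplicativity condition at `a = 1` and using that `ρ` is multiplicative gives
`ρ(m_A Δ_A 1) = m_B Δ_B 1 ⊗ 1`, hence `ν_A(m_A Δ_A 1) = ν_B(m_B Δ_B 1)` in `Q`. These two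
invariants are `n` and `n²` for `M_n(k)`, and `1` and `|G|` for `k[G]`. So `n - 1` and
`n² - |G|`, and therefore also `n - |G| = (n² - |G|) - n(n - 1)`, annihilate `1_Q`; by the
assumption on `char k` one of `n - 1`, `n - |G|` is a unit of `k`, so `1_Q = 0`.
-/

theorem LinearMap.mul'_tensorProduct_eq_map_mul'_comp_tensorTensorTensorComm {k B Q : Type*}
    [CommRing k] [Ring B] [Algebra k B] [Ring Q] [Algebra k Q] :
    LinearMap.mul' k (B ⊗[k] Q) =
      TensorProduct.map (LinearMap.mul' k B) LinearMap.id ∘ₗ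
        TensorProduct.map LinearMap.id (LinearMap.mul' k Q) ∘ₗ
          (TensorProduct.tensorTensorTensorComm k B Q B Q).toLinearMap := by
  refine TensorProduct.ext_fourfold' fun b q b' q' => ?_
  simp [Algebra.TensorProduct.tmul_mul_tmul]

namespace IsFrobComeasuring

variable {k A B Q : Type*} [CommRing k] [Ring A] [Algebra k A] [Ring B] [Algebra k B]
  [Ring Q] [Algebra k Q]
  {ΔA : A →ₗ[k] A ⊗[k] A} {νA : A →ₗ[k] k} {ΔB : B →ₗ[k] B ⊗[k] B} {νB : B →ₗ[k] k}
  {ρ : A →ₗ[k] B ⊗[k] Q}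

theorem map_mul'_eq (h : IsFrobComeasuring ΔA νA ΔB νB ρ) :
    ρ ∘ₗ LinearMap.mul' k A = LinearMap.mul' k (B ⊗[k] Q) ∘ₗ TensorProduct.map ρ ρ :=
  TensorProduct.ext' fun a a' => by simp [h.1]

theorem counit_one_smul_one (h : IsFrobComeasuring ΔA νA ΔB νB ρ) :
    νA 1 • (1 : Q) = νB 1 • (1 : Q) := by
  simpa [h.2.1, Algebra.TensorProduct.one_def] using (h.2.2.2 1).symm

theorem counit_mul'_comul_one_smul_one (h : IsFrobComeasuring ΔA νA ΔB νB ρ) :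
    νA (LinearMap.mul' k A (ΔA 1)) • (1 : Q) = νB (LinearMap.mul' k B (ΔB 1)) • (1 : Q) := by
  have hρ : ρ (LinearMap.mul' k A (ΔA 1)) = LinearMap.mul' k B (ΔB 1) ⊗ₜ 1 := calc
    ρ (LinearMap.mul' k A (ΔA 1))
        = LinearMap.mul' k (B ⊗[k] Q) (TensorProduct.map ρ ρ (ΔA 1)) :=
      LinearMap.congr_fun h.map_mul'_eq (ΔA 1)
    _ = TensorProduct.map (LinearMap.mul' k B) LinearMap.id
          (TensorProduct.map ΔB LinearMap.id (ρ 1)) := by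
      rw [LinearMap.mul'_tensorProduct_eq_map_mul'_comp_tensorTensorTensorComm]
      exact congrArg _ (h.2.2.1 1)
    _ = LinearMap.mul' k B (ΔB 1) ⊗ₜ 1 := by
      rw [h.2.1, Algebra.TensorProduct.one_def, TensorProduct.map_tmul, TensorProduct.map_tmul]
      rfl
  simpa [hρ] using (h.2.2.2 (LinearMap.mul' k A (ΔA 1))).symm

end IsFrobComeasuring

section

variable (k : Type*) [Field k]

theorem matrixCounit_one (n : ℕ) : matrixCounit k n 1 = n := by
  simp [matrixCounit]

theorem matrixCounit_mul'_matrixComul_one (n : ℕ) :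
    matrixCounit k n (LinearMap.mul' k _ (matrixComul k n 1)) = (n : k) ^ 2 := by
  simp [matrixComul, matrixCounit, Matrix.one_apply, sq]

variable (G : Type*) [Group G]

theorem groupCounit_one : groupCounit k G 1 = 1 := by
  simp [groupCounit, MonoidAlgebra.one_def]

theorem groupCounit_mul'_groupComul_one [Fintype G] :
    groupCounit k G (LinearMap.mul' k _ (groupComul k G 1)) = Fintype.card G := by
  simp [groupComul, groupCounit, MonoidAlgebra.one_def, MonoidAlgebra.single_mul_single]

end

theorem natCast_smul_one_of_group_matrix_comeasuring {k : Type*} [Field k]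
    {G : Type*} [Group G] [Fintype G] {n : ℕ} {Q : Type*} [Ring Q] [Algebra k Q]
    (hex : (∃ ρ : Matrix (Fin n) (Fin n) k →ₗ[k] MonoidAlgebra k G ⊗[k] Q,
              IsFrobComeasuring (matrixComul k n) (matrixCounit k n)
                (groupComul k G) (groupCounit k G) ρ) ∨
           (∃ ρ : MonoidAlgebra k G →ₗ[k] Matrix (Fin n) (Fin n) k ⊗[k] Q,
              IsFrobComeasuring (groupComul k G) (groupCounit k G)
                (matrixComul k n) (matrixCounit k n) ρ)) :
    (n : k) • (1 : Q) = 1 ∧ (n : k) ^ 2 • (1 : Q) = (Fintype.card G : k) • 1 := by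
  rcases hex with ⟨ρ, hρ⟩ | ⟨ρ, hρ⟩
  · have h1 := hρ.counit_one_smul_one
    have h2 := hρ.counit_mul'_comul_one_smul_one
    rw [matrixCounit_one, groupCounit_one, one_smul] at h1
    rw [matrixCounit_mul'_matrixComul_one, groupCounit_mul'_groupComul_one] at h2
    exact ⟨h1, h2⟩
  · have h1 := hρ.counit_one_smul_one
    have h2 := hρ.counit_mul'_comul_one_smul_one
    rw [matrixCounit_one, groupCounit_one, one_smul] at h1
    rw [matrixCounit_mul'_matrixComul_one, groupCounit_mul'_groupComul_one] at h2
    exact ⟨h1.symm, h2.symm⟩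

theorem Algebra.subsingleton_of_smul_one_eq_zero {k Q : Type*} [Field k] [Semiring Q]
    [Algebra k Q] {c : k} (hc : c ≠ 0) (h : c • (1 : Q) = 0) : Subsingleton Q := by
  by_contra hQ
  rw [not_subsingleton_iff_nontrivial] at hQ
  exact hc <| (algebraMap k Q).injective <| by rw [Algebra.algebraMap_eq_smul_one, h, map_zero]

theorem intCast_ne_zero_of_not_ringChar_dvd {k : Type*} [Ring k] {m : ℤ}
    (h : ¬ (ringChar k : ℤ) ∣ m) : (m : k) ≠ 0 :=
  (CharP.intCast_eq_zero_iff k (ringChar k) m).not.mpr h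

theorem group_matrix_comeasuring_trivial_general {k : Type*} [Field k]
    {G : Type*} [Group G] [Fintype G] {n : ℕ}
    (hchar : ¬ ((ringChar k : ℤ) ∣ (n : ℤ) - 1) ∨
      ¬ ((ringChar k : ℤ) ∣ (n : ℤ) - (Fintype.card G : ℤ)))
    (Q : Type*) [Ring Q] [Algebra k Q]
    (hex : (∃ ρ : Matrix (Fin n) (Fin n) k →ₗ[k] MonoidAlgebra k G ⊗[k] Q,
              IsFrobComeasuring (matrixComul k n) (matrixCounit k n)
                (groupComul k G) (groupCounit k G) ρ) ∨
           (∃ ρ : MonoidAlgebra k G →ₗ[k] Matrix (Fin n) (Fin n) k ⊗[k] Q,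
              IsFrobComeasuring (groupComul k G) (groupCounit k G)
                (matrixComul k n) (matrixCounit k n) ρ)) :
    Subsingleton Q := by
  obtain ⟨hn, hn2⟩ := natCast_smul_one_of_group_matrix_comeasuring hex
  have hn1 : ((n : k) - 1) • (1 : Q) = 0 := by rw [sub_smul, hn, one_smul, sub_self]
  have hnG : ((n : k) - Fintype.card G) • (1 : Q) = 0 := by
    rw [show (n : k) - Fintype.card G = ((n : k) ^ 2 - Fintype.card G) - n * (n - 1) by ring,
      sub_smul, sub_smul, hn2, sub_self, mul_smul, hn1, smul_zero, sub_self]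
  rcases hchar with hc | hc
  · exact Algebra.subsingleton_of_smul_one_eq_zero
      (by exact_mod_cast intCast_ne_zero_of_not_ringChar_dvd hc) hn1
  · exact Algebra.subsingleton_of_smul_one_eq_zero
      (by exact_mod_cast intCast_ne_zero_of_not_ringChar_dvd hc) hnG

/-- Let `G` be a finite group, `n` a positive integer and `k` a field such that `char k`
does not divide `n − 1` or does not divide `n − |G|`. Then any unital `k`-algebra `Q`
admitting a comeasuring of Frobenius algebras from `M_n(k)` to `k[G]`, or from `k[G]` to
`M_n(k)`, is the zero algebra. -/
theorem group_matrix_comeasuring_trivial {k : Type*} [Field k]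
    {G : Type*} [Group G] [Fintype G] [DecidableEq G] {n : ℕ} (hn : 0 < n)
    (hchar : ¬ ((ringChar k : ℤ) ∣ (n : ℤ) - 1) ∨
      ¬ ((ringChar k : ℤ) ∣ (n : ℤ) - (Fintype.card G : ℤ)))
    (Q : Type*) [Ring Q] [Algebra k Q]
    (hex : (∃ ρ : Matrix (Fin n) (Fin n) k →ₗ[k] MonoidAlgebra k G ⊗[k] Q,
              IsFrobComeasuring (matrixComul k n) (matrixCounit k n)
                (groupComul k G) (groupCounit k G) ρ) ∨
           (∃ ρ : MonoidAlgebra k G →ₗ[k] Matrix (Fin n) (Fin n) k ⊗[k] Q,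
              IsFrobComeasuring (groupComul k G) (groupCounit k G)
                (matrixComul k n) (matrixCounit k n) ρ)) :
    Subsingleton Q :=
  group_matrix_comeasuring_trivial_general hchar Q hex
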